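/- arXiv:2408.10875 — 2 statements merged into one kernel-verified Lean document; each statement's English description precedes it below -/
import Mathlib

section
/- Let I be a standard dyadic n-partition of [0,1]. Then |S_L(I)| = n − 1 and |S_R(I)| = n. -/
/-- `IsSD l r` means `[l, r]` is a standard dyadic interval
`[k/2^m, (k+1)/2^m] ⊆ [0,1]` with `m ≥ 0`, `0 ≤ k ≤ 2^m - 1`. -/
def IsSD (l r : ℚ) : Prop :=
  ∃ m k : ℕ, k < 2 ^ m ∧ l = (k : ℚ) / 2 ^ m ∧ r = ((k : ℚ) + 1) / 2 ^ m

/-- A left standard dyadic interval: `[k/2^m, (k+1)/2^m]` with `m ≥ 1` and `k` even. -/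
def IsLeftSD (l r : ℚ) : Prop :=
  ∃ m k : ℕ, 1 ≤ m ∧ k < 2 ^ m ∧ Even k ∧
    l = (k : ℚ) / 2 ^ m ∧ r = ((k : ℚ) + 1) / 2 ^ m

/-- A right standard dyadic interval: `[k/2^m, (k+1)/2^m]` with `m ≥ 1` and `k` odd;
by convention `[0,1]` is also regarded as a right standard dyadic interval. -/
def IsRightSD (l r : ℚ) : Prop :=
  (l = 0 ∧ r = 1) ∨
    ∃ m k : ℕ, 1 ≤ m ∧ k < 2 ^ m ∧ Odd k ∧
      l = (k : ℚ) / 2 ^ m ∧ r = ((k : ℚ) + 1) / 2 ^ m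

/-- The set `S` of all standard dyadic intervals, an interval `[l, r]` being
represented by the pair `(l, r)` of its endpoints. -/
def SDSet : Set (ℚ × ℚ) := {A | IsSD A.1 A.2}

/-- The conjugate `Ā` of a standard dyadic interval `A ≠ [0,1]`:
the adjacent standard dyadic interval of the same length, on the right of `A`
if `A` is left, and on the left of `A` if `A` is right. -/
noncomputable def conjSD (A : ℚ × ℚ) : ℚ × ℚ := by
  classical
  exact if IsLeftSD A.1 A.2 then (A.2, 2 * A.2 - A.1) else (2 * A.1 - A.2, A.1)

/-- The union of two overlapping or adjacent closed intervals, as an interval: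
from the smaller left endpoint to the larger right endpoint.  In particular
`sdJoin A (conjSD A)` represents the interval `A ∪ Ā`. -/
def sdJoin (A B : ℚ × ℚ) : ℚ × ℚ := (min A.1 B.1, max A.2 B.2)

/-- A standard dyadic `n`-partition of `[0,1]`: breakpoints
`0 = a_0 < a_1 < ... < a_n = 1` with every `[a_i, a_{i+1}]` a standard dyadic
interval. -/
structure SDPartition (n : ℕ) where
  pts : Fin (n + 1) → ℚ
  first : pts 0 = 0
  last : pts (Fin.last n) = 1
  mono : StrictMono pts
  sd : ∀ i : Fin n, IsSD (pts i.castSucc) (pts i.succ)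

/-- `S(I)`: the set of intervals `[a_i, a_j]` (`i < j`) with endpoints breakpoints
of `I` that are standard dyadic intervals. -/
def SIn {n : ℕ} (I : SDPartition n) : Set (ℚ × ℚ) :=
  {A | (∃ i j : Fin (n + 1), i < j ∧ A = (I.pts i, I.pts j)) ∧ IsSD A.1 A.2}

/-- The midpoint of an interval. -/
def midQ (A : ℚ × ℚ) : ℚ := (A.1 + A.2) / 2

/-- The length of an interval. -/
def lenQ (A : ℚ × ℚ) : ℚ := A.2 - A.1

/-- `E`: the set of dyadic rationals strictly between 0 and 1. -/
def Edyadic : Set ℚ := {q | ∃ m k : ℕ, 1 ≤ k ∧ k < 2 ^ m ∧ q = (k : ℚ) / 2 ^ m}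

/-- `S_L(I) = S(I) ∩ S_L`. -/
def SLIn {n : ℕ} (I : SDPartition n) : Set (ℚ × ℚ) := {A ∈ SIn I | IsLeftSD A.1 A.2}

/-- `S_R(I) = S(I) ∩ S_R`. -/
def SRIn {n : ℕ} (I : SDPartition n) : Set (ℚ × ℚ) := {A ∈ SIn I | IsRightSD A.1 A.2}

/-- `M(I)`: the set of midpoints of the subintervals of `I`. -/
def MIn {n : ℕ} (I : SDPartition n) : Set ℚ :=
  {q | ∃ i : Fin n, q = midQ (I.pts i.castSucc, I.pts i.succ)}

/-- `E(I)`: the union of `M(I)` with the breakpoints of `I` other than 0 and 1. -/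
def EIn {n : ℕ} (I : SDPartition n) : Set ℚ :=
  MIn I ∪ {q | (∃ i : Fin (n + 1), I.pts i = q) ∧ q ≠ 0 ∧ q ≠ 1}

/-!
Every breakpoint `b ∈ (0,1)` of `I` is, in lowest terms, `(2k+1)/2^(m+1)`: the midpoint of the
standard dyadic interval `P = [k/2^m, (k+1)/2^m]`. Standard dyadic intervals with overlapping
interiors are nested, so the cells of `I` through the endpoints of `P` lie inside `P`, and both
endpoints of `P` are breakpoints. Hence the left half of `P` is the only member of `S_L(I)` with
right end `b`, and the right half of `P` the only member of `S_R(I)` with left end `b`. Together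
with `[0,1] ∈ S_R(I)` this puts `S_L(I)` in bijection with the `n - 1` interior breakpoints and
`S_R(I)` with these and `0`.
-/

theorem Fin.exists_not_castSucc_and_succ {n : ℕ} {p : Fin (n + 1) → Prop}
    {a b : Fin (n + 1)} (hab : a ≤ b) (ha : ¬p a) (hb : p b) :
    ∃ j : Fin n, a ≤ j.castSucc ∧ j.succ ≤ b ∧ ¬p j.castSucc ∧ p j.succ := by
  induction b using Fin.induction with
  | zero => exact absurd (Fin.le_zero_iff.mp hab ▸ hb) ha
  | succ j ih =>
    by_cases haj : a ≤ j.castSucc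
    · by_cases hj : p j.castSucc
      · obtain ⟨i, hai, hib, hi⟩ := ih haj hj
        exact ⟨i, hai, hib.trans (Fin.castSucc_le_succ j), hi⟩
      · exact ⟨j, haj, le_rfl, hj, hb⟩
    · have : a = j.succ := le_antisymm hab (Fin.castSucc_lt_iff_succ_le.mp (not_le.mp haj))
      exact absurd (this ▸ hb) ha

theorem odd_div_two_pow_injective {c c' m m' : ℕ} (hc : Odd c) (hc' : Odd c')
    (h : (c : ℚ) / 2 ^ m = c' / 2 ^ m') : m = m' ∧ c = c' := by
  have hnat : c * 2 ^ m' = c' * 2 ^ m := by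
    rw [div_eq_div_iff (by positivity) (by positivity)] at h
    exact_mod_cast h
  have hm : m' = m := by
    have := congrArg (padicValNat 2) hnat
    rwa [padicValNat.mul hc.pos.ne' (by positivity), padicValNat.mul hc'.pos.ne' (by positivity),
      padicValNat.prime_pow, padicValNat.prime_pow,
      padicValNat.eq_zero_of_not_dvd hc.not_two_dvd_nat,
      padicValNat.eq_zero_of_not_dvd hc'.not_two_dvd_nat, zero_add, zero_add] at this
  subst hm
  exact ⟨rfl, Nat.eq_of_mul_eq_mul_right (by positivity) hnat⟩

namespace IsSD

variable {l r l' r' : ℚ}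

theorem nonneg (h : IsSD l r) : 0 ≤ l := by
  obtain ⟨m, k, -, rfl, -⟩ := h
  positivity

theorem lt (h : IsSD l r) : l < r := by
  obtain ⟨m, k, -, rfl, rfl⟩ := h
  gcongr
  linarith

theorem le_one (h : IsSD l r) : r ≤ 1 := by
  obtain ⟨m, k, hk, -, rfl⟩ := h
  rw [div_le_one (by positivity)]
  exact_mod_cast hk

theorem nested_of_finer {m d k k' : ℕ} (hlt : (k' : ℚ) / 2 ^ (m + d) < (k + 1) / 2 ^ m)
    (hlt' : (k : ℚ) / 2 ^ m < (k' + 1) / 2 ^ (m + d)) :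
    (k : ℚ) / 2 ^ m ≤ k' / 2 ^ (m + d) ∧
      ((k' : ℚ) + 1) / 2 ^ (m + d) ≤ (k + 1) / 2 ^ m := by
  have scale : ∀ x : ℚ, x / 2 ^ m = x * 2 ^ d / 2 ^ (m + d) := fun x => by
    rw [pow_add]; field_simp
  simp only [scale _, div_lt_div_iff_of_pos_right (by positivity : (0 : ℚ) < 2 ^ (m + d)),
    div_le_div_iff_of_pos_right (by positivity : (0 : ℚ) < 2 ^ (m + d))] at hlt hlt' ⊢
  norm_cast at hlt hlt' ⊢
  constructor <;> linarith

theorem nested (h : IsSD l r) (h' : IsSD l' r') (hlr' : l < r') (hl'r : l' < r) :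
    (l ≤ l' ∧ r' ≤ r) ∨ (l' ≤ l ∧ r ≤ r') := by
  obtain ⟨m, k, -, rfl, rfl⟩ := h
  obtain ⟨m', k', -, rfl, rfl⟩ := h'
  rcases le_total m m' with hmm' | hm'm
  · obtain ⟨d, rfl⟩ := Nat.exists_eq_add_of_le hmm'
    exact .inl (nested_of_finer hl'r hlr')
  · obtain ⟨d, rfl⟩ := Nat.exists_eq_add_of_le hm'm
    exact .inr (nested_of_finer hlr' hl'r)

end IsSD

theorem isLeftSD_iff {l r : ℚ} :
    IsLeftSD l r ↔
      ∃ m k : ℕ, k < 2 ^ m ∧ l = k / 2 ^ m ∧ r = (2 * k + 1) / 2 ^ (m + 1) := by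
  constructor
  · rintro ⟨_ | m, _, hm, hk, ⟨k, rfl⟩, rfl, rfl⟩
    · omega
    refine ⟨m, k, by rw [pow_succ] at hk; omega, ?_, ?_⟩ <;>
      (rw [pow_succ]; push_cast; field_simp; ring)
  · rintro ⟨m, k, hk, rfl, rfl⟩
    refine ⟨m + 1, 2 * k, by omega, by rw [pow_succ]; omega, even_two_mul k, ?_,
      by push_cast; ring⟩
    rw [pow_succ]; push_cast; field_simp

theorem isRightSD_iff {l r : ℚ} :
    IsRightSD l r ↔ (l = 0 ∧ r = 1) ∨
      ∃ m k : ℕ, k < 2 ^ m ∧ l = (2 * k + 1) / 2 ^ (m + 1) ∧ r = (k + 1) / 2 ^ m := by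
  refine or_congr Iff.rfl ⟨?_, ?_⟩
  · rintro ⟨_ | m, _, hm, hk, ⟨k, rfl⟩, rfl, rfl⟩
    · omega
    refine ⟨m, k, by rw [pow_succ] at hk; omega, by push_cast; ring, ?_⟩
    rw [pow_succ]; push_cast; field_simp; ring
  · rintro ⟨m, k, hk, rfl, rfl⟩
    refine ⟨m + 1, 2 * k + 1, by omega, by rw [pow_succ]; omega, odd_two_mul_add_one k,
      by push_cast; ring, ?_⟩
    rw [pow_succ]; push_cast; field_simp; ring

theorem IsLeftSD.isSD {l r : ℚ} (h : IsLeftSD l r) : IsSD l r :=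
  let ⟨m, k, _, hk, _, hl, hr⟩ := h
  ⟨m, k, hk, hl, hr⟩

theorem IsRightSD.isSD {l r : ℚ} (h : IsRightSD l r) : IsSD l r := by
  rcases h with ⟨rfl, rfl⟩ | ⟨m, k, _, hk, _, hl, hr⟩
  · exact ⟨0, 0, one_pos, by simp, by simp⟩
  · exact ⟨m, k, hk, hl, hr⟩

theorem odd_div_two_pow_succ_injective {m m' k k' : ℕ}
    (h : (2 * k + 1 : ℚ) / 2 ^ (m + 1) = (2 * k' + 1) / 2 ^ (m' + 1)) : m = m' ∧ k = k' := by
  have := odd_div_two_pow_injective (odd_two_mul_add_one k) (odd_two_mul_add_one k')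
    (by push_cast; exact h)
  omega

theorem odd_div_two_pow_succ_mem_Ioo {m k : ℕ} (hk : k < 2 ^ m) :
    (2 * k + 1 : ℚ) / 2 ^ (m + 1) ∈ Set.Ioo 0 1 := by
  refine ⟨by positivity, (div_lt_one (by positivity)).mpr ?_⟩
  rw [pow_succ]
  exact_mod_cast (by omega : 2 * k + 1 < 2 ^ m * 2)

theorem exists_odd_div_two_pow_succ_eq {a p : ℕ} (hq : (a : ℚ) / 2 ^ p ∈ Set.Ioo 0 1) :
    ∃ m k : ℕ, k < 2 ^ m ∧ (a : ℚ) / 2 ^ p = (2 * k + 1) / 2 ^ (m + 1) := by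
  have ha : a < 2 ^ p := by exact_mod_cast (div_lt_one (by positivity)).mp hq.2
  have ha0 : a ≠ 0 := by rintro rfl; simp at hq
  obtain ⟨t, c, ⟨k, rfl⟩, rfl⟩ := Nat.exists_eq_two_pow_mul_odd ha0
  obtain ⟨m, rfl⟩ : ∃ m, p = t + (m + 1) := by
    refine Nat.exists_eq_add_of_lt ((Nat.pow_lt_pow_iff_right one_lt_two).mp ?_)
    exact (Nat.le_mul_of_pos_right _ (by omega)).trans_lt ha
  refine ⟨m, k, ?_, ?_⟩
  · rw [pow_add, pow_succ] at ha
    have := Nat.lt_of_mul_lt_mul_left ha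
    omega
  · rw [pow_add]; push_cast; field_simp

namespace SDPartition

variable {n : ℕ} (I : SDPartition n)

def interiorPts : Set ℚ := Set.range I.pts ∩ Set.Ioo 0 1

theorem pts_mem_Icc (i : Fin (n + 1)) : I.pts i ∈ Set.Icc 0 1 :=
  ⟨I.first ▸ I.mono.monotone (Fin.zero_le i), I.last ▸ I.mono.monotone (Fin.le_last i)⟩

theorem finite_interiorPts : I.interiorPts.Finite :=
  (Set.finite_range _).inter_of_left _

theorem ncard_insert_zero_interiorPts : (insert 0 I.interiorPts).ncard = n := by
  have hrange : Set.range I.pts = insert 1 (insert 0 I.interiorPts) := by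
    ext q
    constructor
    · rintro ⟨i, rfl⟩
      obtain ⟨h0, h1⟩ := I.pts_mem_Icc i
      rcases h0.eq_or_lt with h0 | h0
      · exact .inr (.inl h0.symm)
      rcases h1.eq_or_lt with h1 | h1
      · exact .inl h1
      exact .inr (.inr ⟨⟨i, rfl⟩, h0, h1⟩)
    · rintro (rfl | rfl | ⟨hq, -⟩)
      exacts [⟨_, I.last⟩, ⟨_, I.first⟩, hq]
  have h1 : (1 : ℚ) ∉ insert 0 I.interiorPts := by
    rintro (h | ⟨-, -, h⟩) <;> norm_num at h
  have := Set.ncard_range_of_injective I.mono.injective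
  rw [hrange, Set.ncard_insert_of_notMem h1 (I.finite_interiorPts.insert 0), Nat.card_fin] at this
  omega

theorem ncard_interiorPts : I.interiorPts.ncard = n - 1 := by
  have := I.ncard_insert_zero_interiorPts
  rw [Set.ncard_insert_of_notMem (fun h => h.2.1.false) I.finite_interiorPts] at this
  omega

theorem exists_pts_eq_div (i : Fin (n + 1)) : ∃ a p : ℕ, I.pts i = a / 2 ^ p := by
  cases i using Fin.cases with
  | zero => exact ⟨0, 0, by simp [I.first]⟩
  | succ i =>
    obtain ⟨p, k, -, -, hr⟩ := I.sd i
    exact ⟨k + 1, p, by push_cast; exact hr⟩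

theorem mem_SIn {i j : Fin (n + 1)} {l r : ℚ} (hi : I.pts i = l) (hj : I.pts j = r)
    (h : IsSD l r) : (l, r) ∈ SIn I := by
  subst hi hj
  exact ⟨⟨i, j, I.mono.lt_iff_lt.mp h.lt, rfl⟩, h⟩

/-- The subinterval of `I` through either endpoint of `[l, r]` is nested with `[l, r]` and cannot
contain it, since it has no breakpoint in its interior. -/
theorem exists_pts_eq_of_mem_Ioo {l r : ℚ} (h : IsSD l r) {i : Fin (n + 1)}
    (hi : I.pts i ∈ Set.Ioo l r) : (∃ j, I.pts j = l) ∧ ∃ j, I.pts j = r := by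
  constructor
  · obtain ⟨j, -, hji, hjl, hlj⟩ := Fin.exists_not_castSucc_and_succ (p := (l < I.pts ·))
      (Fin.zero_le i) (by rw [I.first, not_lt]; exact h.nonneg) hi.1
    rw [not_lt] at hjl
    rcases (I.sd j).nested h (hjl.trans_lt h.lt) hlj with ⟨-, hrj⟩ | ⟨hlj', -⟩
    · exact absurd ((hrj.trans (I.mono.monotone hji)).trans_lt hi.2) (lt_irrefl r)
    · exact ⟨_, le_antisymm hjl hlj'⟩
  · obtain ⟨j, hij, -, hjr, hrj⟩ := Fin.exists_not_castSucc_and_succ (p := (r ≤ I.pts ·))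
      (Fin.le_last i) (not_le.mpr hi.2) (by rw [I.last]; exact h.le_one)
    rw [not_le] at hjr
    rcases (I.sd j).nested h hjr (h.lt.trans_le hrj) with ⟨hjl, -⟩ | ⟨-, hjr'⟩
    · exact absurd (hi.1.trans_le (I.mono.monotone hij)) (not_lt.mpr hjl)
    · exact ⟨_, le_antisymm hjr' hrj⟩

theorem exists_parent_of_mem_interiorPts {b : ℚ} (hb : b ∈ I.interiorPts) :
    ∃ m k : ℕ, k < 2 ^ m ∧ b = (2 * k + 1) / 2 ^ (m + 1) ∧
      (∃ i, I.pts i = k / 2 ^ m) ∧ ∃ j, I.pts j = (k + 1) / 2 ^ m := by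
  obtain ⟨⟨i, rfl⟩, hb01⟩ := hb
  obtain ⟨a, p, hap⟩ := I.exists_pts_eq_div i
  obtain ⟨m, k, hk, hmid⟩ := exists_odd_div_two_pow_succ_eq (hap ▸ hb01)
  have hP : IsSD (k / 2 ^ m) ((k + 1) / 2 ^ m) := ⟨m, k, hk, rfl, rfl⟩
  have hiP : I.pts i ∈ Set.Ioo ((k : ℚ) / 2 ^ m) ((k + 1) / 2 ^ m) := by
    rw [hap, hmid, pow_succ', ← div_div]
    constructor <;> gcongr ?_ / _ <;> linarith
  exact ⟨m, k, hk, hap.trans hmid, I.exists_pts_eq_of_mem_Ioo hP hiP⟩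

theorem bijOn_snd_SLIn : Set.BijOn Prod.snd (SLIn I) I.interiorPts := by
  refine ⟨?_, ?_, ?_⟩
  · rintro ⟨l, r⟩ ⟨⟨⟨i, j, -, hA⟩, -⟩, hL⟩
    obtain ⟨m, k, hk, -, rfl⟩ := isLeftSD_iff.mp hL
    exact ⟨⟨j, (Prod.ext_iff.mp hA).2.symm⟩, odd_div_two_pow_succ_mem_Ioo hk⟩
  · rintro ⟨l, r⟩ ⟨-, hL⟩ ⟨l', r'⟩ ⟨-, hL'⟩ (rfl : r = r')
    obtain ⟨m, k, -, rfl, rfl⟩ := isLeftSD_iff.mp hL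
    obtain ⟨m', k', -, rfl, hr⟩ := isLeftSD_iff.mp hL'
    obtain ⟨rfl, rfl⟩ := odd_div_two_pow_succ_injective hr
    rfl
  · intro b hb
    obtain ⟨m, k, hk, rfl, ⟨i, hi⟩, -⟩ := I.exists_parent_of_mem_interiorPts hb
    have hL : IsLeftSD (k / 2 ^ m) ((2 * k + 1) / 2 ^ (m + 1)) :=
      isLeftSD_iff.mpr ⟨m, k, hk, rfl, rfl⟩
    obtain ⟨⟨j, hj⟩, -⟩ := hb
    exact ⟨_, ⟨I.mem_SIn hi hj hL.isSD, hL⟩, rfl⟩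

theorem bijOn_fst_SRIn : Set.BijOn Prod.fst (SRIn I) (insert 0 I.interiorPts) := by
  refine ⟨?_, ?_, ?_⟩
  · rintro ⟨l, r⟩ ⟨⟨⟨i, j, -, hA⟩, -⟩, hR⟩
    rcases isRightSD_iff.mp hR with ⟨rfl, -⟩ | ⟨m, k, hk, rfl, -⟩
    · exact .inl rfl
    · exact .inr ⟨⟨i, (Prod.ext_iff.mp hA).1.symm⟩, odd_div_two_pow_succ_mem_Ioo hk⟩
  · rintro ⟨l, r⟩ ⟨-, hR⟩ ⟨l', r'⟩ ⟨-, hR'⟩ (rfl : l = l')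
    rcases isRightSD_iff.mp hR with ⟨rfl, rfl⟩ | ⟨m, k, hk, rfl, rfl⟩ <;>
      rcases isRightSD_iff.mp hR' with ⟨hl, rfl⟩ | ⟨m', k', hk', hl, rfl⟩
    · rfl
    · exact absurd hl (odd_div_two_pow_succ_mem_Ioo hk').1.ne
    · exact absurd hl (odd_div_two_pow_succ_mem_Ioo hk).1.ne'
    · obtain ⟨rfl, rfl⟩ := odd_div_two_pow_succ_injective hl
      rfl
  · rintro b (rfl | hb)
    · have hR : IsRightSD 0 1 := .inl ⟨rfl, rfl⟩
      exact ⟨(0, 1), ⟨I.mem_SIn I.first I.last hR.isSD, hR⟩, rfl⟩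
    obtain ⟨m, k, hk, rfl, -, ⟨j, hj⟩⟩ := I.exists_parent_of_mem_interiorPts hb
    have hR : IsRightSD ((2 * k + 1) / 2 ^ (m + 1)) ((k + 1) / 2 ^ m) :=
      isRightSD_iff.mpr (.inr ⟨m, k, hk, rfl, rfl⟩)
    obtain ⟨⟨i, hi⟩, -⟩ := hb
    exact ⟨_, ⟨I.mem_SIn hi hj hR.isSD, hR⟩, rfl⟩

end SDPartition

/-- for a standard dyadic `n`-partition `I`, `|S_L(I)| = n - 1`
and `|S_R(I)| = n`. -/
theorem statement_3 {n : ℕ} (I : SDPartition n) :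
    (SLIn I).ncard = n - 1 ∧ (SRIn I).ncard = n :=
  ⟨I.bijOn_snd_SLIn.ncard_eq.trans I.ncard_interiorPts,
    I.bijOn_fst_SRIn.ncard_eq.trans I.ncard_insert_zero_interiorPts⟩
end

section
/- Let I be a standard dyadic n-partition of [0,1]. Then |S_+(I)| = n and |S_−(I)| = n − 1. -/
/-- `SignSpec s` says that `s` takes values in `{+1, -1}` on standard dyadic
intervals, `s([0,1]) = +1`, and for `A ≠ [0,1]`, `s A = s (A ∪ Ā)` if `A` is a
left interval while `s A = - s (A ∪ Ā)` if `A` is a right interval. -/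
def SignSpec (s : ℚ × ℚ → ℤ) : Prop :=
  (∀ A ∈ SDSet, s A = 1 ∨ s A = -1) ∧
  s ((0 : ℚ), (1 : ℚ)) = 1 ∧
  ∀ A ∈ SDSet, A ≠ ((0 : ℚ), (1 : ℚ)) →
    (IsLeftSD A.1 A.2 → s A = s (sdJoin A (conjSD A))) ∧
    (IsRightSD A.1 A.2 → s A = - s (sdJoin A (conjSD A)))

/-!
The intervals of `S(I)` form a binary tree under halving, and the sign rule gives the left half
of an interval its own sign and the right half the opposite one. Induct on `n`. A piece of `I`
of minimal length is one half of an s.d. interval `J`, and the other half of `J` is a piece of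
`I` as well: an s.d. interval having the midpoint of `J` (a dyadic of odd numerator) as an
endpoint is at most half as long as `J`. The same bound shows that the two halves are the only
intervals of `S(I)` with that midpoint as an endpoint, so erasing it leaves an `(n-1)`-partition
`I'` with `S(I) = S(I') ∪ {left half, right half}`, and the halves raise each count by one.
-/

lemma IsSD.lt_s10 {l r : ℚ} (h : IsSD l r) : l < r := by
  obtain ⟨m, k, -, rfl, rfl⟩ := h
  gcongr
  linarith

lemma IsSD.nonneg_s10 {l r : ℚ} (h : IsSD l r) : 0 ≤ l := by
  obtain ⟨m, k, -, rfl, rfl⟩ := h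
  positivity

lemma IsSD.le_one_s10 {l r : ℚ} (h : IsSD l r) : r ≤ 1 := by
  obtain ⟨m, k, hk, rfl, rfl⟩ := h
  rw [div_le_one (by positivity)]
  exact_mod_cast hk

lemma eq_of_dyadic_endpoints_eq {m k m' k' : ℕ} (hl : (k : ℚ) / 2 ^ m = k' / 2 ^ m')
    (hr : ((k : ℚ) + 1) / 2 ^ m = (k' + 1) / 2 ^ m') : m = m' ∧ k = k' := by
  have hlen : (1 : ℚ) / 2 ^ m = 1 / 2 ^ m' := by
    rw [add_div, add_div, hl] at hr
    linarith
  have hm : m = m' := by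
    rw [one_div, one_div, inv_inj] at hlen
    exact pow_right_injective₀ (by norm_num) (by norm_num) hlen
  subst hm
  refine ⟨rfl, ?_⟩
  rw [div_left_inj' (by positivity)] at hl
  exact_mod_cast hl

lemma two_pow_le_of_odd_div_eq {a b m m' : ℕ} (ha : Odd a)
    (h : (a : ℚ) / 2 ^ m = b / 2 ^ m') : 2 ^ m ≤ 2 ^ m' := by
  rw [div_eq_div_iff (by positivity) (by positivity)] at h
  have h' : a * 2 ^ m' = b * 2 ^ m := by exact_mod_cast h
  have hcop : Nat.Coprime (2 ^ m) a := (Nat.coprime_two_left.mpr ha).pow_left m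
  exact Nat.le_of_dvd (by positivity) (hcop.dvd_of_dvd_mul_left ⟨b, by rw [h']; ring⟩)

def leftHalf (J : ℚ × ℚ) : ℚ × ℚ := (J.1, midQ J)

def rightHalf (J : ℚ × ℚ) : ℚ × ℚ := (midQ J, J.2)

lemma leftHalf_dyadic (m q : ℕ) :
    leftHalf ((q : ℚ) / 2 ^ m, ((q : ℚ) + 1) / 2 ^ m) =
      (((2 * q : ℕ) : ℚ) / 2 ^ (m + 1), (((2 * q : ℕ) : ℚ) + 1) / 2 ^ (m + 1)) := by
  simp only [leftHalf, midQ, Prod.mk.injEq, pow_succ]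
  push_cast
  exact ⟨by field_simp, by field_simp; ring⟩

lemma rightHalf_dyadic (m q : ℕ) :
    rightHalf ((q : ℚ) / 2 ^ m, ((q : ℚ) + 1) / 2 ^ m) =
      (((2 * q + 1 : ℕ) : ℚ) / 2 ^ (m + 1), (((2 * q + 1 : ℕ) : ℚ) + 1) / 2 ^ (m + 1)) := by
  simp only [rightHalf, midQ, Prod.mk.injEq, pow_succ]
  push_cast
  exact ⟨by field_simp; ring, by field_simp; ring⟩

lemma IsSD.exists_parent {l r : ℚ} (h : IsSD l r) (hne : (l, r) ≠ (0, 1)) :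
    ∃ J : ℚ × ℚ, IsSD J.1 J.2 ∧ (leftHalf J = (l, r) ∨ rightHalf J = (l, r)) := by
  obtain ⟨_ | m, k, hk, rfl, rfl⟩ := h
  · obtain rfl : k = 0 := by simpa using hk
    simp at hne
  obtain ⟨q, rfl | rfl⟩ := Nat.even_or_odd' k
  all_goals
    refine ⟨((q : ℚ) / 2 ^ m, ((q : ℚ) + 1) / 2 ^ m), ⟨m, q, by omega, rfl, rfl⟩, ?_⟩
    simp only [leftHalf_dyadic, rightHalf_dyadic, true_or, or_true]

lemma left_lt_midQ {J : ℚ × ℚ} (h : J.1 < J.2) : J.1 < midQ J := by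
  unfold midQ; linarith

lemma midQ_lt_right {J : ℚ × ℚ} (h : J.1 < J.2) : midQ J < J.2 := by
  unfold midQ; linarith

lemma IsSD.isLeftSD_leftHalf {J : ℚ × ℚ} (h : IsSD J.1 J.2) :
    IsLeftSD (leftHalf J).1 (leftHalf J).2 := by
  obtain ⟨l, r⟩ := J
  obtain ⟨m, q, hq, rfl, rfl⟩ := h
  rw [leftHalf_dyadic]
  exact ⟨m + 1, 2 * q, by omega, by rw [pow_succ]; omega, even_two_mul q, rfl, rfl⟩

lemma IsSD.isRightSD_rightHalf {J : ℚ × ℚ} (h : IsSD J.1 J.2) :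
    IsRightSD (rightHalf J).1 (rightHalf J).2 := by
  obtain ⟨l, r⟩ := J
  obtain ⟨m, q, hq, rfl, rfl⟩ := h
  rw [rightHalf_dyadic]
  exact Or.inr
    ⟨m + 1, 2 * q + 1, by omega, by rw [pow_succ]; omega, odd_two_mul_add_one q, rfl, rfl⟩

lemma IsSD.not_isLeftSD_rightHalf {J : ℚ × ℚ} (h : IsSD J.1 J.2) :
    ¬ IsLeftSD (rightHalf J).1 (rightHalf J).2 := by
  obtain ⟨l, r⟩ := J
  obtain ⟨m, q, -, rfl, rfl⟩ := h
  rw [rightHalf_dyadic]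
  rintro ⟨m', k', -, -, hk', hl, hr⟩
  obtain ⟨-, rfl⟩ := eq_of_dyadic_endpoints_eq hl hr
  exact Nat.not_even_two_mul_add_one q hk'

lemma IsSD.isSD_leftHalf {J : ℚ × ℚ} (h : IsSD J.1 J.2) : IsSD (leftHalf J).1 (leftHalf J).2 := by
  obtain ⟨m, k, -, hk, -, hl, hr⟩ := h.isLeftSD_leftHalf
  exact ⟨m, k, hk, hl, hr⟩

lemma IsSD.isSD_rightHalf {J : ℚ × ℚ} (h : IsSD J.1 J.2) :
    IsSD (rightHalf J).1 (rightHalf J).2 := by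
  obtain ⟨l, r⟩ := J
  obtain ⟨m, q, hq, rfl, rfl⟩ := h
  rw [rightHalf_dyadic]
  exact ⟨m + 1, 2 * q + 1, by rw [pow_succ]; omega, rfl, rfl⟩

lemma IsSD.sub_le_of_midQ {J : ℚ × ℚ} {l r : ℚ} (hJ : IsSD J.1 J.2) (h : IsSD l r)
    (hmid : l = midQ J ∨ r = midQ J) : r - l ≤ lenQ J / 2 := by
  obtain ⟨a, b⟩ := J
  obtain ⟨m, q, -, rfl, rfl⟩ := hJ
  obtain ⟨m', k, -, rfl, rfl⟩ := h
  have hmid' : midQ ((q : ℚ) / 2 ^ m, ((q : ℚ) + 1) / 2 ^ m) =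
      ((2 * q + 1 : ℕ) : ℚ) / 2 ^ (m + 1) := congrArg Prod.fst (rightHalf_dyadic m q)
  have hpow : 2 ^ (m + 1) ≤ 2 ^ m' := by
    rw [hmid'] at hmid
    rcases hmid with h | h
    · exact two_pow_le_of_odd_div_eq (odd_two_mul_add_one q) h.symm
    · exact two_pow_le_of_odd_div_eq (b := k + 1) (odd_two_mul_add_one q)
        (by rw [← h]; push_cast; rfl)
  calc ((k : ℚ) + 1) / 2 ^ m' - k / 2 ^ m' = 1 / 2 ^ m' := by ring
    _ ≤ 1 / 2 ^ (m + 1) := one_div_le_one_div_of_le (by positivity) (by exact_mod_cast hpow)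
    _ = lenQ _ / 2 := by rw [lenQ, pow_succ]; field_simp; ring

lemma conjSD_leftHalf {J : ℚ × ℚ} (h : IsLeftSD (leftHalf J).1 (leftHalf J).2) :
    conjSD (leftHalf J) = rightHalf J := by
  rw [conjSD, if_pos h]
  simp only [leftHalf, rightHalf, midQ, Prod.mk.injEq, true_and]
  ring

lemma conjSD_rightHalf {J : ℚ × ℚ} (h : ¬ IsLeftSD (rightHalf J).1 (rightHalf J).2) :
    conjSD (rightHalf J) = leftHalf J := by
  rw [conjSD, if_neg h]
  simp only [leftHalf, rightHalf, midQ, Prod.mk.injEq, and_true]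
  ring

lemma sdJoin_leftHalf_rightHalf {J : ℚ × ℚ} (h : J.1 ≤ J.2) :
    sdJoin (leftHalf J) (rightHalf J) = J := by
  simp only [sdJoin, leftHalf, rightHalf, midQ]
  ext
  · exact min_eq_left (by linarith)
  · exact max_eq_right (by linarith)

lemma sdJoin_rightHalf_leftHalf {J : ℚ × ℚ} (h : J.1 ≤ J.2) :
    sdJoin (rightHalf J) (leftHalf J) = J := by
  simp only [sdJoin, leftHalf, rightHalf, midQ]
  ext
  · exact min_eq_right (by linarith)
  · exact max_eq_left (by linarith)

lemma SignSpec.apply_leftHalf {s : ℚ × ℚ → ℤ} (hs : SignSpec s) {J : ℚ × ℚ}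
    (hJ : IsSD J.1 J.2) : s (leftHalf J) = s J := by
  have hne : leftHalf J ≠ (0, 1) := fun h => by
    have hmid : midQ J = 1 := congrArg Prod.snd h
    linarith [midQ_lt_right hJ.lt_s10, hJ.le_one_s10]
  have hleft := hJ.isLeftSD_leftHalf
  rw [(hs.2.2 _ hJ.isSD_leftHalf hne).1 hleft, conjSD_leftHalf hleft,
    sdJoin_leftHalf_rightHalf hJ.lt_s10.le]

lemma SignSpec.apply_rightHalf {s : ℚ × ℚ → ℤ} (hs : SignSpec s) {J : ℚ × ℚ}
    (hJ : IsSD J.1 J.2) : s (rightHalf J) = - s J := by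
  have hne : rightHalf J ≠ (0, 1) := fun h => by
    have hmid : midQ J = 0 := congrArg Prod.fst h
    linarith [left_lt_midQ hJ.lt_s10, hJ.nonneg_s10]
  rw [(hs.2.2 _ hJ.isSD_rightHalf hne).2 hJ.isRightSD_rightHalf,
    conjSD_rightHalf hJ.not_isLeftSD_rightHalf, sdJoin_rightHalf_leftHalf hJ.lt_s10.le]

lemma Set.ncard_sep_insert {α : Type*} {a : α} {T : Set α} (ha : a ∉ T) (hT : T.Finite)
    (p : α → Prop) [DecidablePred p] :
    {x ∈ insert a T | p x}.ncard = {x ∈ T | p x}.ncard + if p a then 1 else 0 := by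
  have hsep : ∀ S : Set α, {x ∈ S | p x} = S ∩ {x | p x} := fun _ => rfl
  rw [hsep, hsep]
  split_ifs with hp
  · rw [Set.insert_inter_of_mem (t := {x | p x}) hp,
      Set.ncard_insert_of_notMem (fun h => ha h.1) (hT.inter_of_left _)]
  · rw [Set.insert_inter_of_notMem (t := {x | p x}) hp, add_zero]

namespace SDPartition

variable {n : ℕ}

lemma pos (I : SDPartition n) : 0 < n :=
  Nat.pos_of_ne_zero fun hn => by
    subst hn
    exact zero_ne_one (I.first.symm.trans I.last)

lemma mem_SIn_iff {I : SDPartition n} {A : ℚ × ℚ} :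
    A ∈ SIn I ↔ A.1 ∈ Set.range I.pts ∧ A.2 ∈ Set.range I.pts ∧ IsSD A.1 A.2 := by
  constructor
  · rintro ⟨⟨i, j, -, rfl⟩, hA⟩
    exact ⟨⟨i, rfl⟩, ⟨j, rfl⟩, hA⟩
  · rintro ⟨⟨i, hi⟩, ⟨j, hj⟩, hA⟩
    refine ⟨⟨i, j, I.mono.lt_iff_lt.mp ?_, Prod.ext hi.symm hj.symm⟩, hA⟩
    rw [hi, hj]
    exact hA.lt_s10

lemma SIn_finite (I : SDPartition n) : (SIn I).Finite :=
  ((Set.finite_range I.pts).prod (Set.finite_range I.pts)).subset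
    fun _ hA => ⟨(mem_SIn_iff.mp hA).1, (mem_SIn_iff.mp hA).2.1⟩

lemma SIn_eq_singleton (I : SDPartition 1) : SIn I = {(0, 1)} := by
  have hrange : ∀ x, x ∈ Set.range I.pts ↔ x = 0 ∨ x = 1 := by
    intro x
    change (∃ i : Fin 2, I.pts i = x) ↔ _
    rw [Fin.exists_fin_two, show (1 : Fin 2) = Fin.last 1 from rfl, I.first, I.last]
    tauto
  ext ⟨l, r⟩
  simp only [mem_SIn_iff, hrange, Set.mem_singleton_iff, Prod.mk.injEq]
  constructor
  · rintro ⟨hl | hl, hr | hr, hA⟩ <;> subst hl hr <;> first | exact ⟨rfl, rfl⟩ | linarith [hA.lt_s10]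
  · rintro ⟨rfl, rfl⟩
    exact ⟨Or.inl rfl, Or.inr rfl, 0, 0, by norm_num, by norm_num, by norm_num⟩

lemma succ_le_of_lt (I : SDPartition n) {i : Fin n} {q : Fin (n + 1)}
    (h : I.pts i.castSucc < I.pts q) : I.pts i.succ ≤ I.pts q :=
  I.mono.monotone (Fin.castSucc_lt_iff_succ_le.mp (I.mono.lt_iff_lt.mp h))

lemma le_castSucc_of_lt (I : SDPartition n) {i : Fin n} {q : Fin (n + 1)}
    (h : I.pts q < I.pts i.succ) : I.pts q ≤ I.pts i.castSucc :=
  I.mono.monotone (Fin.le_castSucc_iff.mpr (I.mono.lt_iff_lt.mp h))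

def merge (I : SDPartition (n + 2)) (j : Fin (n + 1))
    (h : IsSD (I.pts j.castSucc.castSucc) (I.pts j.succ.succ)) : SDPartition (n + 1) where
  pts := I.pts ∘ j.succ.castSucc.succAbove
  first := by
    rw [Function.comp_apply, Fin.succAbove_ne_zero_zero (by simp), I.first]
  last := by
    rw [Function.comp_apply, Fin.succAbove_castSucc_of_le _ _ (Fin.le_last _), Fin.succ_last,
      I.last]
  mono := I.mono.comp (Fin.strictMono_succAbove _)
  sd i := by
    simp only [Function.comp_apply]
    rcases lt_trichotomy i j with hij | rfl | hij
    · rw [Fin.succAbove_castSucc_of_lt _ _ (Fin.castSucc_lt_succ_iff.mpr hij.le),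
        Fin.succAbove_castSucc_of_lt _ _ (by simpa using hij)]
      exact I.sd i.castSucc
    · rw [Fin.succAbove_castSucc_of_lt _ _ (Fin.castSucc_lt_succ_iff.mpr le_rfl),
        Fin.succAbove_castSucc_of_le _ _ le_rfl]
      exact h
    · rw [Fin.succAbove_castSucc_of_le _ _ (by simpa using hij),
        Fin.succAbove_castSucc_of_le _ _ (by simpa using hij.le)]
      exact I.sd i.succ

lemma mem_range_merge_iff (I : SDPartition (n + 2)) (j : Fin (n + 1))
    (h : IsSD (I.pts j.castSucc.castSucc) (I.pts j.succ.succ)) {x : ℚ} :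
    x ∈ Set.range (I.merge j h).pts ↔ x ∈ Set.range I.pts ∧ x ≠ I.pts j.succ.castSucc := by
  constructor
  · rintro ⟨i, rfl⟩
    exact ⟨⟨_, rfl⟩, I.mono.injective.ne (Fin.succAbove_ne _ i)⟩
  · rintro ⟨⟨q, rfl⟩, hq⟩
    obtain ⟨i, rfl⟩ := Fin.exists_succAbove_eq (ne_of_apply_ne I.pts hq)
    exact ⟨i, rfl⟩

lemma exists_siblings (I : SDPartition (n + 2)) :
    ∃ (j : Fin (n + 1)) (J : ℚ × ℚ), IsSD J.1 J.2 ∧ I.pts j.castSucc.castSucc = J.1 ∧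
      I.pts j.succ.castSucc = midQ J ∧ I.pts j.succ.succ = J.2 := by
  obtain ⟨i, hmin⟩ := Finite.exists_min fun i : Fin (n + 2) => I.pts i.succ - I.pts i.castSucc
  have hne : (I.pts i.castSucc, I.pts i.succ) ≠ (0, 1) := by
    intro h
    have h0 := congrArg Fin.val (I.mono.injective ((congrArg Prod.fst h).trans I.first.symm))
    have h1 := congrArg Fin.val (I.mono.injective ((congrArg Prod.snd h).trans I.last.symm))
    simp only [Fin.val_castSucc, Fin.val_zero, Fin.val_succ, Fin.val_last] at h0 h1
    omega
  obtain ⟨J, hJ, hleft | hright⟩ := (I.sd i).exists_parent hne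
  · obtain ⟨hl, hm⟩ := Prod.mk.inj hleft.symm
    obtain ⟨j, rfl⟩ : ∃ j : Fin (n + 1), j.castSucc = i := by
      refine Fin.exists_castSucc_eq.mpr fun hi => ?_
      rw [hi, Fin.succ_last, I.last] at hm
      linarith [midQ_lt_right hJ.lt_s10, hJ.le_one_s10]
    rw [Fin.succ_castSucc] at hm
    have hnext := hJ.sub_le_of_midQ (I.sd j.succ) (Or.inl hm)
    have := hmin j.succ
    rw [Fin.succ_castSucc] at this
    refine ⟨j, J, hJ, hl, hm, ?_⟩
    simp only [lenQ, midQ] at *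
    linarith
  · obtain ⟨hm, hr⟩ := Prod.mk.inj hright.symm
    obtain ⟨j, rfl⟩ : ∃ j : Fin (n + 1), j.succ = i := by
      refine Fin.exists_succ_eq.mpr fun hi => ?_
      rw [hi, Fin.castSucc_zero, I.first] at hm
      linarith [left_lt_midQ hJ.lt_s10, hJ.nonneg_s10]
    have hprev := I.sd j.castSucc
    rw [Fin.succ_castSucc] at hprev
    have hlen := hJ.sub_le_of_midQ hprev (Or.inr hm)
    have := hmin j.castSucc
    rw [Fin.succ_castSucc] at this
    refine ⟨j, J, hJ, ?_, hm, hr⟩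
    simp only [lenQ, midQ] at *
    linarith

lemma SIn_eq_insert_merge (I : SDPartition (n + 2)) {j : Fin (n + 1)} {J : ℚ × ℚ}
    (hJ : IsSD J.1 J.2) (h0 : I.pts j.castSucc.castSucc = J.1)
    (h1 : I.pts j.succ.castSucc = midQ J) (h2 : I.pts j.succ.succ = J.2)
    (h : IsSD (I.pts j.castSucc.castSucc) (I.pts j.succ.succ)) :
    SIn I = insert (leftHalf J) (insert (rightHalf J) (SIn (I.merge j h))) := by
  ext ⟨l, r⟩
  simp only [Set.mem_insert_iff, mem_SIn_iff, mem_range_merge_iff, h1, leftHalf, rightHalf,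
    Prod.mk.injEq]
  constructor
  · rintro ⟨hl, hr, hA⟩
    by_cases hlm : l = midQ J
    · obtain ⟨q, rfl⟩ := hr
      have hlen := hJ.sub_le_of_midQ hA (Or.inl hlm)
      have hge := I.succ_le_of_lt (i := j.succ) (q := q) (by rw [h1, ← hlm]; exact hA.lt_s10)
      rw [h2] at hge
      simp only [lenQ, midQ] at *
      right; left
      exact ⟨hlm, by linarith⟩
    by_cases hrm : r = midQ J
    · obtain ⟨q, rfl⟩ := hl
      have hlen := hJ.sub_le_of_midQ hA (Or.inr hrm)
      have hle := I.le_castSucc_of_lt (i := j.castSucc) (q := q)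
        (by rw [Fin.succ_castSucc, h1, ← hrm]; exact hA.lt_s10)
      rw [h0] at hle
      simp only [lenQ, midQ] at *
      left
      exact ⟨by linarith, hrm⟩
    right; right
    exact ⟨⟨hl, hlm⟩, ⟨hr, hrm⟩, hA⟩
  · rintro (⟨rfl, rfl⟩ | ⟨rfl, rfl⟩ | ⟨⟨hl, -⟩, ⟨hr, -⟩, hA⟩)
    · exact ⟨⟨_, h0⟩, ⟨_, h1⟩, hJ.isSD_leftHalf⟩
    · exact ⟨⟨_, h1⟩, ⟨_, h2⟩, hJ.isSD_rightHalf⟩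
    · exact ⟨hl, hr, hA⟩

lemma ne_of_mem_SIn_merge (I : SDPartition (n + 2)) {j : Fin (n + 1)}
    {h : IsSD (I.pts j.castSucc.castSucc) (I.pts j.succ.succ)} {A : ℚ × ℚ}
    (hA : A ∈ SIn (I.merge j h)) : A.1 ≠ I.pts j.succ.castSucc ∧ A.2 ≠ I.pts j.succ.castSucc :=
  have hA := mem_SIn_iff.mp hA
  ⟨((I.mem_range_merge_iff j h).mp hA.1).2, ((I.mem_range_merge_iff j h).mp hA.2.1).2⟩

end SDPartition

theorem SignSpec.ncard_SIn {s : ℚ × ℚ → ℤ} (hs : SignSpec s) :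
    ∀ {n : ℕ} (I : SDPartition (n + 1)),
      ({A ∈ SIn I | s A = 1}).ncard = n + 1 ∧ ({A ∈ SIn I | s A = -1}).ncard = n := by
  intro n
  induction n with
  | zero =>
    intro I
    rw [I.SIn_eq_singleton, ← insert_empty_eq,
      Set.ncard_sep_insert (Set.notMem_empty _) Set.finite_empty,
      Set.ncard_sep_insert (Set.notMem_empty _) Set.finite_empty, hs.2.1]
    simp
  | succ n ih =>
    intro I
    obtain ⟨j, J, hJ, h0, h1, h2⟩ := I.exists_siblings
    have h : IsSD (I.pts j.castSucc.castSucc) (I.pts j.succ.succ) := h0 ▸ h2 ▸ hJ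
    have hfin := (I.merge j h).SIn_finite
    have hR : rightHalf J ∉ SIn (I.merge j h) := fun hA =>
      (I.ne_of_mem_SIn_merge hA).1 h1.symm
    have hL : leftHalf J ∉ insert (rightHalf J) (SIn (I.merge j h)) := by
      rintro (hLR | hA)
      · exact (left_lt_midQ hJ.lt_s10).ne (congrArg Prod.fst hLR)
      · exact (I.ne_of_mem_SIn_merge hA).2 h1.symm
    obtain ⟨ihp, ihm⟩ := ih (I.merge j h)
    rw [I.SIn_eq_insert_merge hJ h0 h1 h2 h, Set.ncard_sep_insert hL (hfin.insert _),
      Set.ncard_sep_insert hL (hfin.insert _), Set.ncard_sep_insert hR hfin,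
      Set.ncard_sep_insert hR hfin, ihp, ihm, hs.apply_leftHalf hJ, hs.apply_rightHalf hJ]
    rcases hs.1 J hJ with hsJ | hsJ <;> simp [hsJ]

/-- for a standard dyadic `n`-partition `I`, `|S_+(I)| = n` and
`|S_-(I)| = n - 1`. -/
theorem statement_10 {n : ℕ} (I : SDPartition n) (s : ℚ × ℚ → ℤ)
    (hs : SignSpec s) :
    ({A ∈ SIn I | s A = 1}).ncard = n ∧ ({A ∈ SIn I | s A = -1}).ncard = n - 1 := by
  obtain ⟨n, rfl⟩ := Nat.exists_eq_add_one.mpr I.pos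
  exact hs.ncard_SIn I
end
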